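/- Let p, q ∈ ℚ∞ with p > q and let x, y ∈ H. Then ⟨v_p^x, v_q^y⟩ = 0 if and only if the following condition, depending on the types (t(p), t(q)), holds: if t(p) = t(q) (any of the three values), then x = y and d(p,q) = 2; if (t(p),t(q)) = (0,1), then y ∈ H⁺x and d(p,q) = 1; if (t(p),t(q)) = (0,∞), then x ∈ -H⁺y and d(p,q) = 1; if (t(p),t(q)) = (1,0), then x ∈ H⁺y and d(p,q) = 1; if (t(p),t(q)) = (1,∞), then y ∈ H⁺x and d(p,q) = 1; if (t(p),t(q)) = (∞,0), then y ∈ -H⁺x and d(p,q) = 1; if (t(p),t(q)) = (∞,1), then x ∈ H⁺y and d(p,q) = 1. -/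

import Mathlib

open Matrix

abbrev V6 := Fin 6 → ℤ

def C6 : Matrix (Fin 6) (Fin 6) ℤ :=
  !![1,0,-1,-1,1,1;
     0,1,-1,-1,1,1;
     0,0,1,0,-1,-1;
     0,0,0,1,-1,-1;
     0,0,0,0,1,0;
     0,0,0,0,0,1]

/-- The bilinear form `⟨x,y⟩ = xᵀ C y` on `ℤ^6`. -/
def form (x y : V6) : ℤ := x ⬝ᵥ C6.mulVec y

/-- The quaternion `i`. -/
def qI : Quaternion ℤ := ⟨0,1,0,0⟩
/-- The quaternion `j`. -/
def qJ : Quaternion ℤ := ⟨0,0,1,0⟩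
/-- The quaternion `k`. -/
def qK : Quaternion ℤ := ⟨0,0,0,1⟩

instance : DecidableEq (Quaternion ℤ) := fun x y =>
  decidable_of_iff (x.re = y.re ∧ x.imI = y.imI ∧ x.imJ = y.imJ ∧ x.imK = y.imK)
    ⟨fun ⟨h1, h2, h3, h4⟩ => QuaternionAlgebra.ext h1 h2 h3 h4,
     fun h => by subst h; exact ⟨rfl, rfl, rfl, rfl⟩⟩

/-- The quaternion group `H = {±1, ±i, ±j, ±k}`. -/
def Hset : Finset (Quaternion ℤ) := {1, -1, qI, -qI, qJ, -qJ, qK, -qK}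

/-- The subset `H⁺ = {1, i, j, k}`. -/
def Hplus : Finset (Quaternion ℤ) := {1, qI, qJ, qK}

/-- Index type for the three special slopes `0`, `1`, `∞`. -/
inductive Ty | zero | one | inf
deriving DecidableEq

def h0 : V6 := ![0,0,1,1,1,1]
def h1 : V6 := ![1,1,2,2,1,1]
def hinf : V6 := ![1,1,1,1,0,0]

def hTy : Ty → V6
  | .zero => h0
  | .one => h1
  | .inf => hinf

/-- The vectors `v_t^x` for `t ∈ {0,1,∞}` and `x ∈ H⁺`. -/
def vposTy : Ty → Quaternion ℤ → V6
  | .zero, x => if x = 1 then ![0,0,1,0,1,0] else if x = qI then ![-1,0,0,0,0,0]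
      else if x = qJ then ![0,0,1,0,0,1] else ![0,1,1,1,1,1]
  | .one, x => if x = 1 then ![1,0,1,1,1,0] else if x = qI then ![0,1,1,1,1,0]
      else if x = qJ then ![0,0,1,0,0,0] else ![1,1,2,1,1,1]
  | .inf, x => if x = 1 then ![1,0,0,1,0,0] else if x = qI then ![1,1,1,1,1,0]
      else if x = qJ then ![0,0,0,0,0,-1] else ![1,0,1,0,0,0]

/-- The vectors `v_t^x` for `t ∈ {0,1,∞}` and `x ∈ H`, with `v_t^{-x} = h_t - v_t^x`. -/
def vTy (t : Ty) (x : Quaternion ℤ) : V6 :=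
  if x ∈ Hplus then vposTy t x else hTy t - vposTy t (-x)

/-- `a(q)`: numerator, with `a(∞) = 1`. -/
def aQ : WithTop ℚ → ℤ := WithTop.recTopCoe 1 Rat.num

/-- `b(q)`: denominator, with `b(∞) = 0`. -/
def bQ : WithTop ℚ → ℤ := WithTop.recTopCoe 0 (fun x => (x.den : ℤ))

/-- The type `t(q) ∈ {0,1,∞}` of a slope `q`. -/
def tyQ (q : WithTop ℚ) : Ty :=
  if aQ q % 2 = 0 then Ty.zero else if bQ q % 2 = 1 then Ty.one else Ty.inf

/-- `⌊n⌋₂ = n/2` for even `n` and `(n-1)/2` for odd `n`. -/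
def half2 (n : ℤ) : ℤ := if Even n then n / 2 else (n - 1) / 2

/-- `h_q = b(q)·h₀ + a(q)·h_∞`. -/
def hQ (q : WithTop ℚ) : V6 := bQ q • h0 + aQ q • hinf

/-- `v_q^x = v_{t(q)}^x + ⌊b(q)⌋₂·h₀ + ⌊a(q)⌋₂·h_∞`. -/
def vQ (q : WithTop ℚ) (x : Quaternion ℤ) : V6 :=
  vTy (tyQ q) x + half2 (bQ q) • h0 + half2 (aQ q) • hinf

/-- `rk e = ⟨e, h_∞⟩`. -/
def rk (e : V6) : ℤ := form e hinf

/-- `deg e = ⟨h₀, e⟩`. -/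
def degV (e : V6) : ℤ := form h0 e

/-- `e` is positive if `rk e > 0`, or `rk e = 0` and `deg e > 0`. -/
def PosV (e : V6) : Prop := 0 < rk e ∨ (rk e = 0 ∧ 0 < degV e)

/-- `d(p,q) = |a(q)b(p) - a(p)b(q)|`. -/
def dQ (p q : WithTop ℚ) : ℤ := |aQ q * bQ p - aQ p * bQ q|

/-- Complexity `c(p) = |a(p)| + |b(p)| + |a(p)+b(p)|`. -/
def cpx (p : WithTop ℚ) : ℤ := |aQ p| + |bQ p| + |aQ p + bQ p|

/-! Reading the types `0, 1, ∞` as slopes and writing `det(p, q) = a(p) b(q) - a(q) b(p)`,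
bilinearity and `a(p) = 2⌊a(p)⌋₂ + (a(p) mod 2)` (likewise for `b`) give
`2⟨v_p^x, v_q^y⟩ = 2⟨v_{t(p)}^x, v_{t(q)}^y⟩ + det(t(p), t(q)) - det(p, q)`,
because `a(p), b(p)` have the parities of the slope `t(p)`, and the pairings of `v_t^x` with `h₀`
and `h_∞` depend only on `t`. As `det(p, q) = d(p, q) > 0`, the form vanishes iff `d(p, q)`
equals the first two terms; a finite check over `H × H` shows that these are either `≤ 0` or
equal to `2` (equal types), resp. `1` (distinct types), the latter exactly under the stated
relation between `x` and `y`. -/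

def detQ (p q : WithTop ℚ) : ℤ := aQ p * bQ q - aQ q * bQ p

def Ty.slope : Ty → WithTop ℚ
  | .zero => (0 : ℚ)
  | .one => (1 : ℚ)
  | .inf => ⊤

def Ty.Compatible : Ty → Ty → Quaternion ℤ → Quaternion ℤ → Prop
  | .zero, .one, x, y | .one, .inf, x, y => ∃ h ∈ Hplus, y = h * x
  | .one, .zero, x, y | .inf, .one, x, y => ∃ h ∈ Hplus, x = h * y
  | .zero, .inf, x, y => ∃ h ∈ Hplus, x = -(h * y)
  | .inf, .zero, x, y => ∃ h ∈ Hplus, y = -(h * x)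
  | _, _, x, y => x = y

/-- By `two_mul_form_vQ`, `2⟨v_p^x, v_q^y⟩ + det(p, q)` depends on `p` and `q` only through
their types; this is its value. -/
def localPairing (t t' : Ty) (x y : Quaternion ℤ) : ℤ :=
  2 * form (vTy t x) (vTy t' y) + detQ t.slope t'.slope

@[simp] lemma aQ_slope_zero : aQ Ty.zero.slope = 0 := rfl
@[simp] lemma aQ_slope_one : aQ Ty.one.slope = 1 := rfl
@[simp] lemma aQ_slope_inf : aQ Ty.inf.slope = 1 := rfl
@[simp] lemma bQ_slope_zero : bQ Ty.zero.slope = 1 := rfl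
@[simp] lemma bQ_slope_one : bQ Ty.one.slope = 1 := rfl
@[simp] lemma bQ_slope_inf : bQ Ty.inf.slope = 0 := rfl

lemma form_add_left (u v w : V6) : form (u + v) w = form u w + form v w :=
  add_dotProduct u v _

lemma form_add_right (u v w : V6) : form u (v + w) = form u v + form u w := by
  rw [form, mulVec_add, dotProduct_add]; rfl

lemma form_smul_left (c : ℤ) (u w : V6) : form (c • u) w = c * form u w :=
  smul_dotProduct c u _

lemma form_smul_right (c : ℤ) (u w : V6) : form u (c • w) = c * form u w := by
  rw [form, mulVec_smul, dotProduct_smul]; rfl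

lemma form_h0_h0 : form h0 h0 = 0 := by decide
lemma form_h0_hinf : form h0 hinf = 2 := by decide
lemma form_hinf_h0 : form hinf h0 = -2 := by decide
lemma form_hinf_hinf : form hinf hinf = 0 := by decide

section vTy

variable (t : Ty) (x : Quaternion ℤ)

lemma form_vTy_h0 : form (vTy t x) h0 = -aQ t.slope := by
  cases t <;> simp only [vTy, vposTy, hTy] <;> split_ifs <;> decide

lemma form_vTy_hinf : form (vTy t x) hinf = bQ t.slope := by
  cases t <;> simp only [vTy, vposTy, hTy] <;> split_ifs <;> decide

lemma form_h0_vTy : form h0 (vTy t x) = aQ t.slope := by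
  cases t <;> simp only [vTy, vposTy, hTy] <;> split_ifs <;> decide

lemma form_hinf_vTy : form hinf (vTy t x) = -bQ t.slope := by
  cases t <;> simp only [vTy, vposTy, hTy] <;> split_ifs <;> decide

end vTy

lemma half2_eq_ediv (n : ℤ) : half2 n = n / 2 := by
  unfold half2; split_ifs with h
  · rfl
  · rw [Int.not_even_iff] at h; omega

lemma isCoprime_aQ_bQ (q : WithTop ℚ) : IsCoprime (aQ q) (bQ q) := by
  cases q with
  | top => exact isCoprime_one_left
  | coe r => exact Int.isCoprime_iff_gcd_eq_one.mpr r.reduced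

lemma aQ_bQ_emod_two (q : WithTop ℚ) :
    aQ q % 2 = aQ (tyQ q).slope ∧ bQ q % 2 = bQ (tyQ q).slope := by
  have not_both_even : ¬ (2 ∣ aQ q ∧ 2 ∣ bQ q) := fun ⟨ha, hb⟩ => by
    have := Int.isUnit_iff.mp ((isCoprime_aQ_bQ q).isUnit_of_dvd' ha hb)
    omega
  unfold tyQ
  split_ifs <;> simp only [aQ_slope_zero, aQ_slope_one, aQ_slope_inf, bQ_slope_zero,
    bQ_slope_one, bQ_slope_inf] <;> omega

lemma detQ_pos_of_lt {p q : WithTop ℚ} (h : q < p) : 0 < detQ p q := by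
  cases p with
  | top =>
    lift q to ℚ using h.ne_top
    simpa [detQ, aQ, bQ] using q.den_pos
  | coe r =>
    lift q to ℚ using (h.trans (WithTop.coe_lt_top r)).ne_top
    have := (Rat.lt_iff _ _).mp (WithTop.coe_lt_coe.mp h)
    simp only [detQ, aQ, bQ, WithTop.recTopCoe_coe]
    omega

lemma dQ_eq_detQ_of_lt {p q : WithTop ℚ} (h : q < p) : dQ p q = detQ p q := by
  rw [dQ, abs_sub_comm]
  exact abs_of_pos (detQ_pos_of_lt h)

lemma two_mul_form_vQ (p q : WithTop ℚ) (x y : Quaternion ℤ) :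
    2 * form (vQ p x) (vQ q y) = localPairing (tyQ p) (tyQ q) x y - detQ p q := by
  obtain ⟨hAp, hBp⟩ := aQ_bQ_emod_two p
  obtain ⟨haq, hbq⟩ := aQ_bQ_emod_two q
  simp only [vQ, localPairing, detQ, half2_eq_ediv, form_add_left, form_add_right,
    form_smul_left, form_smul_right, form_h0_h0, form_h0_hinf, form_hinf_h0, form_hinf_hinf,
    form_vTy_h0, form_vTy_hinf, form_h0_vTy, form_hinf_vTy, ← hAp, ← hBp, ← haq, ← hbq]
  have eA := Int.emod_add_mul_ediv (aQ p) 2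
  have eB := Int.emod_add_mul_ediv (bQ p) 2
  have ea := Int.emod_add_mul_ediv (aQ q) 2
  have eb := Int.emod_add_mul_ediv (bQ q) 2
  linear_combination (-bQ q) * eA - (aQ p % 2 + 2 * (aQ p / 2)) * eb + bQ p * ea
    + (aQ q % 2 + 2 * (aQ q / 2)) * eB

lemma localPairing_spec (t t' : Ty) {x y : Quaternion ℤ} (hx : x ∈ Hset) (hy : y ∈ Hset) :
    (localPairing t t' x y ≤ 0 ∨ localPairing t t' x y = if t = t' then 2 else 1) ∧
      (localPairing t t' x y = (if t = t' then 2 else 1) ↔ t.Compatible t' x y) := by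
  revert y; revert x
  cases t <;> cases t' <;> simp only [Ty.Compatible] <;> decide

theorem stmt8 (p q : WithTop ℚ) (hpq : q < p) (x y : Quaternion ℤ)
    (hx : x ∈ Hset) (hy : y ∈ Hset) :
    form (vQ p x) (vQ q y) = 0 ↔
      (match tyQ p, tyQ q with
      | .zero, .zero => x = y ∧ dQ p q = 2
      | .one, .one => x = y ∧ dQ p q = 2
      | .inf, .inf => x = y ∧ dQ p q = 2
      | .zero, .one => (∃ h ∈ Hplus, y = h * x) ∧ dQ p q = 1
      | .zero, .inf => (∃ h ∈ Hplus, x = -(h * y)) ∧ dQ p q = 1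
      | .one, .zero => (∃ h ∈ Hplus, x = h * y) ∧ dQ p q = 1
      | .one, .inf => (∃ h ∈ Hplus, y = h * x) ∧ dQ p q = 1
      | .inf, .zero => (∃ h ∈ Hplus, y = -(h * x)) ∧ dQ p q = 1
      | .inf, .one => (∃ h ∈ Hplus, x = h * y) ∧ dQ p q = 1) := by
  have hdet := detQ_pos_of_lt hpq
  have hform := two_mul_form_vQ p q x y
  obtain ⟨hrange, hcompat⟩ := localPairing_spec (tyQ p) (tyQ q) hx hy
  have key : form (vQ p x) (vQ q y) = 0 ↔
      (tyQ p).Compatible (tyQ q) x y ∧ dQ p q = if tyQ p = tyQ q then 2 else 1 := by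
    rw [dQ_eq_detQ_of_lt hpq, ← hcompat]
    generalize (if tyQ p = tyQ q then (2 : ℤ) else 1) = target at hrange ⊢
    omega
  rw [key]
  cases tyQ p <;> cases tyQ q <;> rfl
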